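/- Let H be a pseudoexpander. Then Σ_{S ∈ SAT(H)} (1/2)^(|V(H) \ Fix(S)|) = 1; that is, assigning to each S ∈ SAT(H) the weight (1/2)^(|V(H) \ Fix(S)|) defines a probability distribution on SAT(H). -/

import Mathlib

open scoped Classical

namespace NBPPaper

/-! ### Literals and assignments.
A literal is a pair `(x, b)` of a variable and a polarity (`true` = positive literal).
A set of literals is a `Finset (Var × Bool)`. -/

/-- A set of literals is consistent: no variable occurs both positively and negatively. -/
def Consistent {Var : Type} (S : Finset (Var × Bool)) : Prop :=
  ∀ x : Var, ¬((x, true) ∈ S ∧ (x, false) ∈ S)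

/-- `S` is a set of literals over the variable set `W`. -/
def LitsOver {Var : Type} (W : Finset Var) (S : Finset (Var × Bool)) : Prop :=
  Consistent S ∧ ∀ l ∈ S, l.1 ∈ W

/-- `S` is an assignment of exactly the variables of `W`:
it contains exactly one literal of each variable of `W` and nothing else. -/
def AssignsExactly {Var : Type} (W : Finset Var) (S : Finset (Var × Bool)) : Prop :=
  (∀ l ∈ S, l.1 ∈ W) ∧ ∀ x ∈ W, ∃! b : Bool, (x, b) ∈ S

/-- Satisfaction of a CNF, given as a set of clauses (each clause a set of literals):
every clause contains a literal of `S`. -/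
def SatCNF {V : Type} (φ : Set (Finset (V × Bool))) (S : Finset (V × Bool)) : Prop :=
  ∀ C ∈ φ, ∃ l ∈ C, l ∈ S

/-! ### Nondeterministic branching programs -/

/-- An edge of a nondeterministic branching program over variable type `Var`
with vertex set `Fin n`.  `lab = none` means the edge is unlabelled; the field
`id` allows parallel edges (multigraph). -/
structure NBPEdge (Var : Type) (n : ℕ) where
  src : Fin n
  dst : Fin n
  lab : Option (Var × Bool)
  id : ℕ
deriving DecidableEq

/-- A nondeterministic branching program: a finite DAG (the vertices `Fin n` are
listed in a topological order, i.e. every edge increases the index) with a single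
source (the only vertex with no incoming edge) and a single sink (the only vertex
with no outgoing edge). -/
structure NBP (Var : Type) where
  n : ℕ
  edges : Finset (NBPEdge Var n)
  source : Fin n
  sink : Fin n
  acyc : ∀ e ∈ edges, e.src < e.dst
  source_no_in : ∀ e ∈ edges, e.dst ≠ source
  sink_no_out : ∀ e ∈ edges, e.src ≠ sink
  only_source : ∀ v : Fin n, v ≠ source → ∃ e ∈ edges, e.dst = v
  only_sink : ∀ v : Fin n, v ≠ sink → ∃ e ∈ edges, e.src = v

variable {Var : Type}

/-- The set of literals labelling the edges of a path (a list of edges). -/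
def pathLits [DecidableEq Var] {n : ℕ} (p : List (NBPEdge Var n)) : Finset (Var × Bool) :=
  (p.filterMap NBPEdge.lab).toFinset

/-- The set of variables occurring (as edge labels) on a path. -/
def pathVars [DecidableEq Var] {n : ℕ} (p : List (NBPEdge Var n)) : Finset Var :=
  ((p.filterMap NBPEdge.lab).map Prod.fst).toFinset

/-- The set of vertices visited by a path. -/
def pathVertices {n : ℕ} (p : List (NBPEdge Var n)) : Finset (Fin n) :=
  (p.map NBPEdge.src).toFinset ∪ (p.map NBPEdge.dst).toFinset

/-- The number of occurrences of the variable `x` as an edge label on the path `p`. -/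
def occCount [DecidableEq Var] {n : ℕ} (x : Var) (p : List (NBPEdge Var n)) : ℕ :=
  (p.filterMap NBPEdge.lab).countP (fun l => decide (l.1 = x))

namespace NBP

/-- `p` is a directed path of `Z` from vertex `u` to vertex `v`. -/
def IsPathFrom (Z : NBP Var) (u v : Fin Z.n) (p : List (NBPEdge Var Z.n)) : Prop :=
  p ≠ [] ∧ (∀ e ∈ p, e ∈ Z.edges) ∧ List.Chain' (fun e f => e.dst = f.src) p ∧
    p.head?.map NBPEdge.src = some u ∧ p.getLast?.map NBPEdge.dst = some v

/-- `p` is a source-sink path of `Z`. -/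
def IsSourceSink (Z : NBP Var) (p : List (NBPEdge Var Z.n)) : Prop :=
  Z.IsPathFrom Z.source Z.sink p

/-- A computational path: a source-sink path carrying no two opposite literals. -/
def IsCompPath [DecidableEq Var] (Z : NBP Var) (p : List (NBPEdge Var Z.n)) : Prop :=
  Z.IsSourceSink p ∧ Consistent (pathLits p)

/-- The set `Vars(Z)` of variables whose literals occur on edges of `Z`. -/
def vars [DecidableEq Var] (Z : NBP Var) : Finset Var :=
  Z.edges.biUnion (fun e => (e.lab.map Prod.fst).toFinset)

/-- `Z` is a (syntactic) read-`d`-times NBP. -/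
def ReadTimes [DecidableEq Var] (Z : NBP Var) (d : ℕ) : Prop :=
  ∀ p, Z.IsSourceSink p → ∀ x : Var, occCount x p ≤ d

/-- `Z` is a uniform read-`d`-times NBP: every variable of `Z` occurs exactly `d`
times on every source-sink path. -/
def UniformReadTimes [DecidableEq Var] (Z : NBP Var) (d : ℕ) : Prop :=
  Z.ReadTimes d ∧ ∀ p, Z.IsSourceSink p → ∀ x ∈ Z.vars, occCount x p = d

/-- `Z` computes the Boolean function with variable set `W` whose satisfying
(total) assignments are described by the predicate `F`. -/
def Computes [DecidableEq Var] (Z : NBP Var) (W : Finset Var)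
    (F : Finset (Var × Bool) → Prop) : Prop :=
  Z.vars = W ∧ ∀ S, AssignsExactly W S → (F S ↔ ∃ p, Z.IsCompPath p ∧ pathLits p ⊆ S)

end NBP

/-- `parts` is the partition of the path `p` generated by the vertex set `X`:
`p` is cut into `|X| + 1` consecutive nonempty subpaths whose cut points are
exactly the vertices of `X`. -/
def GeneratesPartition {n : ℕ} (X : Finset (Fin n)) (p : List (NBPEdge Var n))
    (parts : List (List (NBPEdge Var n))) : Prop :=
  p = parts.flatten ∧ parts.length = X.card + 1 ∧ (∀ q ∈ parts, q ≠ []) ∧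
    (parts.dropLast.filterMap (fun q => q.getLast?.map NBPEdge.dst)).toFinset = X

/-- Variables of `Y₁` occur only on parts with even (0-based) index, i.e. odd-numbered
subpaths, and variables of `Y₂` only on parts with odd (0-based) index. -/
def OddEvenSplit [DecidableEq Var] {n : ℕ} (parts : List (List (NBPEdge Var n)))
    (Y₁ Y₂ : Finset Var) : Prop :=
  ∀ k : ℕ, ∀ x ∈ pathVars (parts.getD k []),
    (x ∈ Y₁ → k % 2 = 0) ∧ (x ∈ Y₂ → k % 2 = 1)

/-- The set `X` of vertices of `Z` (containing neither source nor sink) separates the two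
disjoint subsets `Y₁, Y₂` of `Vars(Z)`. -/
def NBP.Separates [DecidableEq Var] (Z : NBP Var) (X : Finset (Fin Z.n))
    (Y₁ Y₂ : Finset Var) : Prop :=
  Disjoint Y₁ Y₂ ∧ Y₁ ⊆ Z.vars ∧ Y₂ ⊆ Z.vars ∧ Z.source ∉ X ∧ Z.sink ∉ X ∧
  ∃ p parts, Z.IsCompPath p ∧ GeneratesPartition X p parts ∧
    (OddEvenSplit parts Y₁ Y₂ ∨ OddEvenSplit parts Y₂ Y₁)

/-! ### Rooted trees -/

/-- A finite rooted tree on (a subset of) the vertex type `V`, given by a parent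
function together with a depth function certifying acyclicity. -/
structure RootedTree (V : Type) [DecidableEq V] where
  verts : Finset V
  root : V
  parent : V → V
  depth : V → ℕ
  root_mem : root ∈ verts
  parent_mem : ∀ v ∈ verts, v ≠ root → parent v ∈ verts
  depth_root : depth root = 0
  depth_parent : ∀ v ∈ verts, v ≠ root → depth v = depth (parent v) + 1

namespace RootedTree

variable {V : Type} [DecidableEq V]

/-- The children of a vertex. -/
def children (T : RootedTree V) (u : V) : Finset V :=
  T.verts.filter (fun v => v ≠ T.root ∧ T.parent v = u)

/-- The leaves of the tree: vertices with no children. -/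
def leaves (T : RootedTree V) : Finset V :=
  T.verts.filter (fun v => T.children v = ∅)

/-- The vertex set of the path from the root to `v` (i.e. `v` and all its ancestors). -/
def pathVerts (T : RootedTree V) (v : V) : Finset V :=
  (Finset.range (T.depth v + 1)).image (fun k => T.parent^[k] v)

/-- The height of the tree: the largest number of vertices on a root-leaf path. -/
def height (T : RootedTree V) : ℕ :=
  (T.verts.sup T.depth) + 1

/-- Every vertex has at most two children. -/
def IsBinary (T : RootedTree V) : Prop :=
  ∀ u ∈ T.verts, (T.children u).card ≤ 2

/-- The tree is extended: none of its leaves has a sibling. -/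
def IsExtended (T : RootedTree V) : Prop :=
  ∀ v ∈ T.verts, v ≠ T.root → T.children v = ∅ → T.children (T.parent v) = {v}

/-- The edge set of the tree (as unordered pairs). -/
def edgeSet (T : RootedTree V) : Finset (Sym2 V) :=
  (T.verts.filter (fun v => v ≠ T.root)).image (fun v => s(v, T.parent v))

end RootedTree

/-! ### Binary-tree-based graphs and pseudoexpanders -/

/-- A binary-tree-based (BTB) graph on the vertex type `V`: an edge-disjoint union of
`m` extended binary rooted trees such that every leaf of one of the trees is a leaf of
exactly two of the trees, any two trees have at most one vertex in common (that vertex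
being a leaf of both), and the roots are pairwise distinct. -/
structure BTB (V : Type) [DecidableEq V] [Fintype V] where
  m : ℕ
  tree : Fin m → RootedTree V
  binary : ∀ i, (tree i).IsBinary
  extended : ∀ i, (tree i).IsExtended
  cover : ∀ v : V, ∃ i, v ∈ (tree i).verts
  edge_disjoint : ∀ i j, i ≠ j → Disjoint ((tree i).edgeSet) ((tree j).edgeSet)
  leaf_two : ∀ i, ∀ v ∈ (tree i).leaves,
    (Finset.univ.filter (fun j => v ∈ (tree j).leaves)).card = 2
  common_le_one : ∀ i j, i ≠ j → ∀ u v,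
    u ∈ (tree i).verts → u ∈ (tree j).verts →
    v ∈ (tree i).verts → v ∈ (tree j).verts → u = v
  common_leaf : ∀ i j, i ≠ j → ∀ v, v ∈ (tree i).verts → v ∈ (tree j).verts →
    v ∈ (tree i).leaves ∧ v ∈ (tree j).leaves
  roots_inj : Function.Injective (fun i => (tree i).root)

namespace BTB

variable {V : Type} [DecidableEq V] [Fintype V]

/-- `ℓ` is the common leaf of the (adjacent) trees `T_i` and `T_j`. -/
def IsCommonLeaf (H : BTB V) (i j : Fin H.m) (ℓ : V) : Prop :=
  i ≠ j ∧ ℓ ∈ (H.tree i).leaves ∧ ℓ ∈ (H.tree j).leaves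

/-- The trees `T_i` and `T_j` are adjacent (share a common leaf); equivalently,
`{t_i, t_j}` is a pseudoedge of `H`. -/
def Adjacent (H : BTB V) (i j : Fin H.m) : Prop :=
  ∃ ℓ, H.IsCommonLeaf i j ℓ

/-- The pseudodegree of the root `t_i`: the number of pseudoedges containing it. -/
noncomputable def pseudodegree (H : BTB V) (i : Fin H.m) : ℕ :=
  (Finset.univ.filter (fun j => H.Adjacent i j)).card

/-- The set of root vertices of `H`. -/
def rootSet (H : BTB V) : Finset V :=
  Finset.univ.image (fun i => (H.tree i).root)

/-- A pseudomatching: a set of pseudoedges (recorded as ordered pairs of root indices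
with `i < j`) no two of which share an end. -/
def IsPseudomatching (H : BTB V) (M : Finset (Fin H.m × Fin H.m)) : Prop :=
  (∀ e ∈ M, e.1 < e.2 ∧ H.Adjacent e.1 e.2) ∧
  ∀ e ∈ M, ∀ f ∈ M, e ≠ f → e.1 ≠ f.1 ∧ e.1 ≠ f.2 ∧ e.2 ≠ f.1 ∧ e.2 ≠ f.2

/-- A pseudomatching between the disjoint sets `U` and `W` of roots (given by their
indices): every pseudoedge of `M` has one end in `U` and the other in `W`. -/
def IsPseudomatchingBetween (H : BTB V) (M : Finset (Fin H.m × Fin H.m))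
    (U W : Finset (Fin H.m)) : Prop :=
  H.IsPseudomatching M ∧ ∀ e ∈ M, (e.1 ∈ U ∧ e.2 ∈ W) ∨ (e.1 ∈ W ∧ e.2 ∈ U)

/-- The set `⋃M` of root vertices matched by the pseudomatching `M`. -/
def matchingRoots (H : BTB V) (M : Finset (Fin H.m × Fin H.m)) : Finset V :=
  M.biUnion (fun e => {(H.tree e.1).root, (H.tree e.2).root})

/-- The vertex set `V(P_{i,j})` of the path connecting the roots `t_i` and `t_j`
through their common leaf `ℓ`. -/
def clauseVerts (H : BTB V) (i j : Fin H.m) (ℓ : V) : Finset V :=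
  (H.tree i).pathVerts ℓ ∪ (H.tree j).pathVerts ℓ

/-- `S` satisfies the monotone CNF `φ_H`. -/
def SatisfiesPhi (H : BTB V) (S : Finset (V × Bool)) : Prop :=
  ∀ i j ℓ, H.IsCommonLeaf i j ℓ → ∃ v ∈ H.clauseVerts i j ℓ, (v, true) ∈ S

/-- `S` falsifies no clause of `φ_H`. -/
def FalsifiesNoClause (H : BTB V) (S : Finset (V × Bool)) : Prop :=
  ∀ i j ℓ, H.IsCommonLeaf i j ℓ → ¬(∀ v ∈ H.clauseVerts i j ℓ, (v, false) ∈ S)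

/-- `H` is a pseudoexpander. -/
def IsPseudoexpander (H : BTB V) : Prop :=
  (∀ i, ((H.tree i).height : ℝ) ≤ Real.logb 2 H.m / 4.9 + 3) ∧
  ∀ U W : Finset (Fin H.m), Disjoint U W →
    (H.m : ℝ) ^ (0.999 : ℝ) ≤ U.card → (H.m : ℝ) ^ (0.999 : ℝ) ≤ W.card →
    ∃ M, H.IsPseudomatchingBetween M U W ∧ (H.m : ℝ) ^ (0.999 : ℝ) / 3 ≤ M.card

/-! #### The probability space on the satisfying assignments of `φ_H` -/

/-- The set `SAT(H)` of satisfying assignments of `φ_H` (total assignments of the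
variables `V(H)` satisfying every clause). -/
noncomputable def SATH (H : BTB V) : Finset (Finset (V × Bool)) :=
  Finset.univ.filter (fun S => AssignsExactly Finset.univ S ∧ H.SatisfiesPhi S)

/-- `Fix(S)`: the set of leaf variables `ℓ_{i,j}` occurring positively in `S` such that
all the other variables of the clause `C_{i,j}` occur negatively in `S`. -/
def Fix (H : BTB V) (S : Finset (V × Bool)) : Set V :=
  {ℓ | ∃ i j, H.IsCommonLeaf i j ℓ ∧ (ℓ, true) ∈ S ∧
      ∀ v ∈ H.clauseVerts i j ℓ, v ≠ ℓ → (v, false) ∈ S}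

/-- The probability weight of `S`: `(1/2) ^ |V(H) \ Fix(S)|`. -/
noncomputable def weight (H : BTB V) (S : Finset (V × Bool)) : ℝ :=
  (1 / 2 : ℝ) ^ (Fintype.card V - (H.Fix S).ncard)

/-- The probability of the event `E` in the probability space on `SAT(H)`. -/
noncomputable def Pr (H : BTB V) (E : Finset (V × Bool) → Prop) : ℝ :=
  ∑ S ∈ H.SATH.filter E, H.weight S

/-- `|S \ Fix(S)|`: the number of literals of `S` that are not fixed. -/
noncomputable def nonFixedCount (H : BTB V) (S : Finset (V × Bool)) : ℕ :=
  (S.filter (fun l => ¬(l.2 = true ∧ l.1 ∈ H.Fix S))).card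

/-- `v` and `w` are siblings (in one of the trees of `H`). -/
def Sibling (H : BTB V) (v w : V) : Prop :=
  ∃ k, v ∈ (H.tree k).verts ∧ w ∈ (H.tree k).verts ∧
    v ≠ (H.tree k).root ∧ w ≠ (H.tree k).root ∧ v ≠ w ∧
    (H.tree k).parent v = (H.tree k).parent w

/-- `S` respects the pseudoedge `{t_i, t_j}`: all non-root variables of `C_{i,j}` occur
negatively in `S` and the siblings of all internal variables of `C_{i,j}` occur
positively in `S`. -/
def Respects (H : BTB V) (i j : Fin H.m) (S : Finset (V × Bool)) : Prop :=
  ∃ ℓ, H.IsCommonLeaf i j ℓ ∧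
    (∀ v ∈ H.clauseVerts i j ℓ,
      v ≠ (H.tree i).root → v ≠ (H.tree j).root → (v, false) ∈ S) ∧
    (∀ v ∈ H.clauseVerts i j ℓ,
      v ≠ (H.tree i).root → v ≠ (H.tree j).root → v ≠ ℓ →
      ∀ w, H.Sibling v w → (w, true) ∈ S)

/-- `S` is `η`-comfortable w.r.t. the pseudomatching `M`: `S` falsifies no clause of
`φ_H` and respects at least `η·|M|` pseudoedges of `M`. -/
noncomputable def Comfortable (H : BTB V) (M : Finset (Fin H.m × Fin H.m)) (η : ℝ)
    (S : Finset (V × Bool)) : Prop :=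
  H.FalsifiesNoClause S ∧
    η * M.card ≤ ((M.filter (fun e => H.Respects e.1 e.2 S)).card : ℝ)

/-- `S` is a guarded set of literals. -/
def Guarded (H : BTB V) (S : Finset (V × Bool)) : Prop :=
  Consistent S ∧ ∀ i j ℓ, H.IsCommonLeaf i j ℓ →
    ((ℓ, true) ∉ S ∧ (ℓ, false) ∉ S) ∨
    (∃ v ∈ H.clauseVerts i j ℓ, v ≠ ℓ ∧ (v, true) ∈ S) ∨
    ((ℓ, true) ∈ S ∧ ∀ v ∈ H.clauseVerts i j ℓ, v ≠ ℓ → (v, false) ∈ S)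

/-! #### Matching CNFs and matching OR-CNFs -/

/-- The 'half clause' `C^{1/2}_{i,j}`: the positive clause on the vertices of the path
from `t_i` (if `side = true`) or from `t_j` (if `side = false`) to the common leaf `ℓ`. -/
def halfClause (H : BTB V) (i j : Fin H.m) (ℓ : V) (side : Bool) : Finset (V × Bool) :=
  (if side then (H.tree i).pathVerts ℓ else (H.tree j).pathVerts ℓ).image (fun v => (v, true))

/-- The matching CNF w.r.t. `M` determined by the side choice `c`: one half clause per
pseudoedge of `M`.  The formulas of `CNF(M)` are exactly the CNFs `matchingCNF H M c`. -/
def matchingCNF (H : BTB V) (M : Finset (Fin H.m × Fin H.m))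
    (c : Fin H.m × Fin H.m → Bool) : Set (Finset (V × Bool)) :=
  {C | ∃ e ∈ M, ∃ ℓ, H.IsCommonLeaf e.1 e.2 ℓ ∧ C = H.halfClause e.1 e.2 ℓ (c e)}

/-- A matching OR-CNF w.r.t. `M` is determined by a map `Ψ` assigning to each assignment
`S₀` of the variables `V(H) \ ⋃M` a matching CNF (given by its side choice `Ψ S₀`);
the formula is `⋁_{S₀} (Conj(S₀) ∧ matchingCNF H M (Ψ S₀))`.  `S` satisfies it iff for
(the) `S₀ ⊆ S`, `S` satisfies the corresponding matching CNF. -/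
def SatORCNF (H : BTB V) (M : Finset (Fin H.m × Fin H.m))
    (Ψ : Finset (V × Bool) → (Fin H.m × Fin H.m) → Bool) (S : Finset (V × Bool)) : Prop :=
  ∃ S₀, AssignsExactly (Finset.univ \ H.matchingRoots M) S₀ ∧ S₀ ⊆ S ∧
    SatCNF (H.matchingCNF M (Ψ S₀)) S

/-- `X` is an `(a, b)`-determining set for the NBP `Z` computing `φ_H`. -/
def IsDeterminingSet (H : BTB V) (Z : NBP V) (a b : ℝ) (X : Finset (Fin Z.n)) : Prop :=
  (X.card : ℝ) ≤ a ∧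
  ∃ M : Finset (Fin H.m × Fin H.m), H.IsPseudomatching M ∧ b ≤ (M.card : ℝ) ∧
    ∃ Ψ : Finset (V × Bool) → (Fin H.m × Fin H.m) → Bool,
      ∀ p, Z.IsCompPath p → X ⊆ pathVertices p → H.SatORCNF M Ψ (pathLits p)

end BTB

/-!
Flip a fair coin for every vertex of `H` and then repair the outcome: whenever all variables
of a clause `C_{i,j}` other than its leaf `ℓ_{i,j}` came out false, set `ℓ_{i,j}` to true.
A leaf `ℓ_{i,j}` occurs in no other clause, and the other variables of `C_{i,j}` are inner
vertices of a tree, hence leaves of no clause; so the repair never changes what it reads, and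
its result is a satisfying assignment `S`. The outcomes repaired to `S` are exactly those that
agree with `S` off `Fix(S)`, so `S` is hit with probability `2^{|Fix(S)|} / 2^{|V(H)|}`.
-/

namespace HeadedCNF

variable {α : Type*} (Φ : Set (α × Finset α))

/-- A pair `c ∈ Φ` encodes the positive clause `c.2` with a distinguished variable `c.1`,
its head. -/
def IsWellHeaded : Prop :=
  ∀ c ∈ Φ, c.1 ∈ c.2 ∧ ∀ c' ∈ Φ, c.1 ∈ c'.2 → c'.1 = c.1

def Satisfies (g : α → Bool) : Prop :=
  ∀ c ∈ Φ, ∃ v ∈ c.2, g v = true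

def Forces (g : α → Bool) (x : α) : Prop :=
  ∃ c ∈ Φ, c.1 = x ∧ ∀ v ∈ c.2, v ≠ x → g v = false

noncomputable def fixedVars [Fintype α] (g : α → Bool) : Finset α :=
  Finset.univ.filter fun x => Forces Φ g x ∧ g x = true

noncomputable def repair (g : α → Bool) : α → Bool :=
  fun x => g x || decide (Forces Φ g x)

variable {Φ}

@[simp]
lemma mem_fixedVars [Fintype α] {g : α → Bool} {x : α} :
    x ∈ fixedVars Φ g ↔ Forces Φ g x ∧ g x = true := by
  simp [fixedVars]

lemma not_forces_of_mem_of_ne (hΦ : IsWellHeaded Φ) {c : α × Finset α} (hc : c ∈ Φ)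
    {v : α} (hv : v ∈ c.2) (hne : v ≠ c.1) (g : α → Bool) : ¬ Forces Φ g v := by
  rintro ⟨c', hc', rfl, -⟩
  exact hne ((hΦ c' hc').2 c hc hv).symm

lemma forces_congr {g g' : α → Bool} (h : ∀ c ∈ Φ, ∀ v ∈ c.2, v ≠ c.1 → g v = g' v) (x : α) :
    Forces Φ g x ↔ Forces Φ g' x := by
  refine exists_congr fun c => and_congr_right fun hc => and_congr_right fun hx => ?_
  subst hx
  exact forall₂_congr fun v hv => imp_congr_right fun hne => by rw [h c hc v hv hne]

lemma repair_eq_of_mem_of_ne (hΦ : IsWellHeaded Φ) (g : α → Bool) {c : α × Finset α}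
    (hc : c ∈ Φ) {v : α} (hv : v ∈ c.2) (hne : v ≠ c.1) : repair Φ g v = g v := by
  simp [repair, not_forces_of_mem_of_ne hΦ hc hv hne]

lemma forces_repair_iff (hΦ : IsWellHeaded Φ) (g : α → Bool) (x : α) :
    Forces Φ (repair Φ g) x ↔ Forces Φ g x :=
  forces_congr (fun _ hc _ hv hne => repair_eq_of_mem_of_ne hΦ g hc hv hne) x

lemma satisfies_repair (hΦ : IsWellHeaded Φ) (g : α → Bool) : Satisfies Φ (repair Φ g) := by
  intro c hc
  by_cases hbody : ∃ v ∈ c.2, g v = true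
  · obtain ⟨v, hv, hgv⟩ := hbody
    exact ⟨v, hv, by simp [repair, hgv]⟩
  · push Not at hbody
    have hforce : Forces Φ g c.1 := ⟨c, hc, rfl, fun v hv _ => by simpa using hbody v hv⟩
    exact ⟨c.1, (hΦ c hc).1, by simp [repair, hforce]⟩

lemma repair_eq_self {g : α → Bool} (hg : Satisfies Φ g) : repair Φ g = g := by
  funext x
  by_cases hx : Forces Φ g x
  · obtain ⟨c, hc, rfl, hfalse⟩ := hx
    obtain ⟨v, hv, hgv⟩ := hg c hc
    have hvx : v = c.1 := by
      by_contra hne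
      simp [hfalse v hv hne] at hgv
    simp [repair, ← hvx, hgv]
  · simp [repair, hx]

section Counting

variable [Fintype α]

lemma repair_eq_iff (hΦ : IsWellHeaded Φ) {g : α → Bool} (hg : Satisfies Φ g) (g₀ : α → Bool) :
    repair Φ g₀ = g ↔ ∀ x ∉ fixedVars Φ g, g₀ x = g x := by
  simp only [mem_fixedVars, not_and]
  constructor
  · rintro rfl x hx
    by_cases hforce : Forces Φ g₀ x
    · simp [forces_repair_iff hΦ, repair, hforce] at hx
    · simp [repair, hforce]
  · intro hagree
    have hbody : ∀ c ∈ Φ, ∀ v ∈ c.2, v ≠ c.1 → g₀ v = g v := fun c hc v hv hne =>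
      hagree v fun hforce => absurd hforce (not_forces_of_mem_of_ne hΦ hc hv hne g)
    conv_rhs => rw [← repair_eq_self hg]
    funext x
    simp only [repair, forces_congr hbody x]
    by_cases hforce : Forces Φ g x
    · simp [hforce]
    · simp [hforce, hagree x fun h => absurd h hforce]

lemma card_filter_repair_eq [DecidableEq α] (hΦ : IsWellHeaded Φ) {g : α → Bool}
    (hg : Satisfies Φ g) :
    (Finset.univ.filter fun g₀ => repair Φ g₀ = g).card = 2 ^ (fixedVars Φ g).card := by
  have hfiber : (Finset.univ.filter fun g₀ => repair Φ g₀ = g) =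
      Fintype.piFinset fun x => if x ∈ fixedVars Φ g then Finset.univ else {g x} := by
    ext g₀
    simp only [Finset.mem_filter, Finset.mem_univ, true_and, repair_eq_iff hΦ hg,
      Fintype.mem_piFinset]
    refine forall_congr' fun x => ?_
    split_ifs with hx <;> simp [hx]
  rw [hfiber, Fintype.card_piFinset]
  simp only [apply_ite Finset.card, Finset.card_univ, Fintype.card_bool, Finset.card_singleton]
  rw [Finset.prod_ite_mem, Finset.univ_inter, Finset.prod_const]

lemma sum_two_pow_card_fixedVars [DecidableEq α] (hΦ : IsWellHeaded Φ) :
    ∑ g ∈ Finset.univ.filter (Satisfies Φ), 2 ^ (fixedVars Φ g).card = 2 ^ Fintype.card α := by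
  have hmaps : ∀ g₀ ∈ (Finset.univ : Finset (α → Bool)),
      repair Φ g₀ ∈ Finset.univ.filter (Satisfies Φ) := fun g₀ _ =>
    Finset.mem_filter.2 ⟨Finset.mem_univ _, satisfies_repair hΦ g₀⟩
  have hcount := Finset.card_eq_sum_card_fiberwise hmaps
  rw [Finset.card_univ, Fintype.card_fun, Fintype.card_bool] at hcount
  rw [hcount]
  exact Finset.sum_congr rfl fun g hg =>
    (card_filter_repair_eq hΦ (Finset.mem_filter.1 hg).2).symm

theorem sum_half_pow_card_sub_card_fixedVars [DecidableEq α] (hΦ : IsWellHeaded Φ) :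
    ∑ g ∈ Finset.univ.filter (Satisfies Φ), (1 / 2 : ℝ) ^ (Fintype.card α - (fixedVars Φ g).card)
      = 1 := by
  have hterm : ∀ g : α → Bool, (1 / 2 : ℝ) ^ (Fintype.card α - (fixedVars Φ g).card)
      = 2 ^ (fixedVars Φ g).card / 2 ^ Fintype.card α := fun g => by
    rw [one_div_pow, pow_sub₀ _ two_ne_zero (Finset.card_le_univ _)]
    field_simp
  simp only [hterm, ← Finset.sum_div]
  rw [div_eq_one_iff_eq (by positivity)]
  exact_mod_cast sum_two_pow_card_fixedVars hΦ

end Counting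

end HeadedCNF

section Assignments

variable {V : Type} [Fintype V] [DecidableEq V]

def toLits (g : V → Bool) : Finset (V × Bool) :=
  Finset.univ.image fun v => (v, g v)

@[simp]
lemma mem_toLits {g : V → Bool} {x : V} {b : Bool} : (x, b) ∈ toLits g ↔ g x = b := by
  simp [toLits, Prod.ext_iff]

lemma toLits_injective : Function.Injective (toLits : (V → Bool) → Finset (V × Bool)) :=
  fun g g' h => funext fun v =>
    (mem_toLits.1 (h ▸ mem_toLits.2 rfl : (v, g v) ∈ toLits g')).symm

lemma assignsExactly_univ_iff {S : Finset (V × Bool)} :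
    AssignsExactly Finset.univ S ↔ ∃ g, toLits g = S := by
  constructor
  · rintro ⟨-, hS⟩
    refine ⟨fun v => (hS v (Finset.mem_univ v)).exists.choose, ?_⟩
    ext ⟨x, b⟩
    obtain ⟨b₀, hb₀, huniq⟩ := hS x (Finset.mem_univ x)
    rw [mem_toLits, huniq _ (hS x (Finset.mem_univ x)).exists.choose_spec]
    exact ⟨fun h => h ▸ hb₀, fun h => (huniq b h).symm⟩
  · rintro ⟨g, rfl⟩
    exact ⟨fun _ _ => Finset.mem_univ _, fun x _ => ⟨g x, by simp, fun b hb => by simp_all⟩⟩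

end Assignments

namespace RootedTree

variable {V : Type} [DecidableEq V] (T : RootedTree V)

lemma iterate_parent_mem_and_depth {ℓ : V} (hℓ : ℓ ∈ T.verts) {k : ℕ} (hk : k ≤ T.depth ℓ) :
    T.parent^[k] ℓ ∈ T.verts ∧ T.depth (T.parent^[k] ℓ) = T.depth ℓ - k := by
  induction k with
  | zero => exact ⟨hℓ, rfl⟩
  | succ k ih =>
    obtain ⟨hmem, hdepth⟩ := ih (by omega)
    have hne : T.parent^[k] ℓ ≠ T.root := fun h => by
      rw [h, T.depth_root] at hdepth; omega
    rw [Function.iterate_succ_apply']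
    exact ⟨T.parent_mem _ hmem hne, by have := T.depth_parent _ hmem hne; omega⟩

lemma self_mem_pathVerts (v : V) : v ∈ T.pathVerts v :=
  Finset.mem_image.2 ⟨0, by simp, rfl⟩

lemma mem_verts_sdiff_leaves_of_mem_pathVerts {ℓ v : V} (hℓ : ℓ ∈ T.verts)
    (hv : v ∈ T.pathVerts ℓ) (hne : v ≠ ℓ) : v ∈ T.verts \ T.leaves := by
  obtain ⟨k, hk, rfl⟩ : ∃ k < T.depth ℓ + 1, T.parent^[k] ℓ = v := by
    simpa [pathVerts] using hv
  obtain ⟨k, rfl⟩ : ∃ k', k = k' + 1 := Nat.exists_eq_add_one.2 (Nat.pos_of_ne_zero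
    (by rintro rfl; exact hne rfl))
  obtain ⟨hchild_mem, hchild_depth⟩ := T.iterate_parent_mem_and_depth hℓ (k := k) (by omega)
  have hchild_ne : T.parent^[k] ℓ ≠ T.root := fun h => by
    rw [h, T.depth_root] at hchild_depth; omega
  have hchild : T.parent^[k] ℓ ∈ T.children (T.parent^[k + 1] ℓ) := by
    simp only [children, Finset.mem_filter]
    exact ⟨hchild_mem, hchild_ne, (Function.iterate_succ_apply' T.parent k ℓ).symm⟩
  refine Finset.mem_sdiff.2 ⟨(T.iterate_parent_mem_and_depth hℓ (by omega)).1, fun hleaf => ?_⟩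
  rw [(Finset.mem_filter.1 hleaf).2] at hchild
  simp at hchild

end RootedTree

namespace BTB

variable {V : Type} [DecidableEq V] [Fintype V] (H : BTB V)

lemma not_isCommonLeaf_of_mem_clauseVerts {i j : Fin H.m} {ℓ v : V} (hℓ : H.IsCommonLeaf i j ℓ)
    (hv : v ∈ H.clauseVerts i j ℓ) (hne : v ≠ ℓ) (a b : Fin H.m) : ¬ H.IsCommonLeaf a b v := by
  obtain ⟨-, hℓi, hℓj⟩ := hℓ
  obtain ⟨k, hvk, hv_not_leaf⟩ : ∃ k, v ∈ (H.tree k).verts ∧ v ∉ (H.tree k).leaves := by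
    rcases Finset.mem_union.1 hv with hv | hv
    · exact ⟨i, Finset.mem_sdiff.1 <|
        (H.tree i).mem_verts_sdiff_leaves_of_mem_pathVerts (Finset.mem_filter.1 hℓi).1 hv hne⟩
    · exact ⟨j, Finset.mem_sdiff.1 <|
        (H.tree j).mem_verts_sdiff_leaves_of_mem_pathVerts (Finset.mem_filter.1 hℓj).1 hv hne⟩
  rintro ⟨-, hva, -⟩
  by_cases hak : a = k
  · exact hv_not_leaf (hak ▸ hva)
  · exact hv_not_leaf (H.common_leaf a k hak v (Finset.mem_filter.1 hva).1 hvk).2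

/-- The clauses `C_{i,j}` of `φ_H`, each headed by its leaf variable `ℓ_{i,j}`. -/
def headedClauses : Set (V × Finset V) :=
  {(ℓ, H.clauseVerts i j ℓ) | (i) (j) (ℓ) (_ : H.IsCommonLeaf i j ℓ)}

lemma isWellHeaded_headedClauses : HeadedCNF.IsWellHeaded H.headedClauses := by
  rintro _ ⟨i, j, ℓ, hℓ, rfl⟩
  refine ⟨Finset.mem_union_left _ ((H.tree i).self_mem_pathVerts ℓ), ?_⟩
  rintro _ ⟨i', j', ℓ', hℓ', rfl⟩ hmem
  by_contra hne
  exact H.not_isCommonLeaf_of_mem_clauseVerts hℓ' hmem (Ne.symm hne) i j hℓ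

lemma satisfiesPhi_toLits_iff (g : V → Bool) :
    H.SatisfiesPhi (toLits g) ↔ HeadedCNF.Satisfies H.headedClauses g := by
  simp only [SatisfiesPhi, HeadedCNF.Satisfies, headedClauses, mem_toLits]
  constructor
  · rintro h _ ⟨i, j, ℓ, hℓ, rfl⟩
    exact h i j ℓ hℓ
  · intro h i j ℓ hℓ
    exact h _ ⟨i, j, ℓ, hℓ, rfl⟩

lemma fix_toLits (g : V → Bool) :
    H.Fix (toLits g) = HeadedCNF.fixedVars H.headedClauses g := by
  ext ℓ
  simp only [Finset.mem_coe, HeadedCNF.mem_fixedVars, HeadedCNF.Forces, headedClauses, Fix,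
    Set.mem_ofPred_eq, mem_toLits]
  constructor
  · rintro ⟨i, j, hℓ, hgℓ, hfalse⟩
    exact ⟨⟨_, ⟨i, j, ℓ, hℓ, rfl⟩, rfl, hfalse⟩, hgℓ⟩
  · rintro ⟨⟨_, ⟨i, j, ℓ, hℓ, rfl⟩, rfl, hfalse⟩, hgℓ⟩
    exact ⟨i, j, hℓ, hgℓ, hfalse⟩

lemma SATH_eq_image :
    H.SATH = (Finset.univ.filter (HeadedCNF.Satisfies H.headedClauses)).image toLits := by
  ext S
  simp only [SATH, Finset.mem_filter, Finset.mem_univ, true_and, Finset.mem_image,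
    assignsExactly_univ_iff]
  constructor
  · rintro ⟨⟨g, rfl⟩, hg⟩
    exact ⟨g, (H.satisfiesPhi_toLits_iff g).1 hg, rfl⟩
  · rintro ⟨g, hg, rfl⟩
    exact ⟨⟨g, rfl⟩, (H.satisfiesPhi_toLits_iff g).2 hg⟩

end BTB

theorem statement_6_general (V : Type) [DecidableEq V] [Fintype V] (H : BTB V) :
    ∑ S ∈ H.SATH, H.weight S = 1 := by
  rw [H.SATH_eq_image, Finset.sum_image toLits_injective.injOn]
  simp only [BTB.weight, BTB.fix_toLits, Set.ncard_coe_finset]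
  exact HeadedCNF.sum_half_pow_card_sub_card_fixedVars H.isWellHeaded_headedClauses

/-- the weights `(1/2)^{|V(H) \ Fix(S)|}` of the satisfying assignments of
`φ_H` sum up to `1`, i.e. they define a probability distribution on `SAT(H)`. -/
theorem statement_6 (V : Type) [DecidableEq V] [Fintype V] (H : BTB V)
    (hH : H.IsPseudoexpander) :
    ∑ S ∈ H.SATH, H.weight S = 1 :=
  statement_6_general V H

end NBPPaper
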